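/- Let m be a positive even number and n = 2^m. Then there exists a family of vectors (h_A), indexed by the finite sets A ⊆ Fin m with |A| ≤ m/2 − 1, such that: (i) each h_A lies in the Reed–Muller code RM(m/2 − 1, m); (ii) each h_A has Hamming weight exactly 2^(m/2 + 1) (equal to 2√n); and (iii) the ZMod 2-linear span of {h_A : A ⊆ Fin m, |A| ≤ m/2 − 1} equals RM(m/2 − 1, m). -/

import Mathlib

/-!
For disjoint `A` and `B`, the product `∏_{a ∈ A} x_a · ∏_{b ∈ B} (x_b + 1)` is the indicator of the
subcube `{x | x = 1 on A, x = 0 on B}`, so its weight is `2 ^ (m - |A ∪ B|)`; expanding the product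
gives `∑_{S ⊆ B} v_{A ∪ S}`, a codeword of `RM(|A ∪ B|, m)`. Padding every `A` with `|A| ≤ r` by a
disjoint `B` to `|A ∪ B| = r` gives codewords of weight `2 ^ (m - r)`. The expansion is `v_A` plus
monomials of strictly larger sets, so downward induction on `|A|` recovers every `v_A` from them.
For even `m > 0` and `r = m/2 - 1` the weight is `2 ^ (m/2 + 1)`.
-/

def vA (m : ℕ) (A : Finset (Fin m)) : (Fin m → ZMod 2) → ZMod 2 :=
  fun x => ∏ a ∈ A, x a

def wt (m : ℕ) (w : (Fin m → ZMod 2) → ZMod 2) : ℕ :=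
  (Finset.univ.filter (fun x => w x = 1)).card

def RMcode (m r : ℕ) : Submodule (ZMod 2) ((Fin m → ZMod 2) → ZMod 2) :=
  Submodule.span (ZMod 2) {w | ∃ A : Finset (Fin m), A.card ≤ r ∧ w = vA m A}

open Finset

theorem Fintype.card_filter_forall_mem_eq {ι α : Type*} [Fintype ι] [DecidableEq ι]
    [Fintype α] [DecidableEq α] (C : Finset ι) (f : ι → α) :
    #{x : ι → α | ∀ i ∈ C, x i = f i} = Fintype.card α ^ (Fintype.card ι - #C) := by
  have : ({x : ι → α | ∀ i ∈ C, x i = f i} : Finset _) =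
      Fintype.piFinset fun i => if i ∈ C then {f i} else univ := by
    ext x
    simp only [mem_filter, mem_univ, true_and, Fintype.mem_piFinset]
    refine forall_congr' fun i => ?_
    split_ifs with hi <;> simp [hi]
  simp [this, apply_ite Finset.card, prod_ite, prod_const, filter_notMem_eq_sdiff,
    ← compl_eq_univ_sdiff, card_compl]

theorem ZMod.ne_zero_iff_eq_one_mod_two (a : ZMod 2) : a ≠ 0 ↔ a = 1 := by
  revert a; decide

theorem ZMod.add_one_ne_zero_iff_mod_two (a : ZMod 2) : a + 1 ≠ 0 ↔ a = 0 := by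
  revert a; decide

namespace ReedMuller

variable {m : ℕ}

def subcube (A B : Finset (Fin m)) : (Fin m → ZMod 2) → ZMod 2 :=
  fun x => (∏ a ∈ A, x a) * ∏ b ∈ B, (x b + 1)

theorem subcube_eq_one_iff (A B : Finset (Fin m)) (x : Fin m → ZMod 2) :
    subcube A B x = 1 ↔ (∀ a ∈ A, x a = 1) ∧ ∀ b ∈ B, x b = 0 := by
  simp only [subcube, ← ZMod.ne_zero_iff_eq_one_mod_two, mul_ne_zero_iff, prod_ne_zero_iff,
    ZMod.add_one_ne_zero_iff_mod_two]

theorem wt_subcube {A B : Finset (Fin m)} (hAB : Disjoint A B) :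
    wt m (subcube A B) = 2 ^ (m - #(A ∪ B)) := by
  have := Fintype.card_filter_forall_mem_eq (A ∪ B) fun i => if i ∈ A then (1 : ZMod 2) else 0
  rw [ZMod.card, Fintype.card_fin] at this
  rw [← this, wt]
  congr 1
  ext x
  simp only [mem_filter, mem_univ, true_and, subcube_eq_one_iff, mem_union, or_imp, forall_and]
  refine and_congr (forall₂_congr fun a ha => by simp [ha]) (forall₂_congr fun b hb => ?_)
  simp [disjoint_right.1 hAB hb]

theorem subcube_eq_sum_vA {A B : Finset (Fin m)} (hAB : Disjoint A B) :
    subcube A B = ∑ S ∈ B.powerset, vA m (A ∪ S) := by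
  funext x
  simp only [subcube, prod_add, mul_sum, Finset.sum_apply, vA, prod_const_one]
  refine sum_congr rfl fun S hS => ?_
  rw [prod_union (hAB.mono_right (mem_powerset.1 hS)), mul_one]

theorem subcube_mem_RMcode {r : ℕ} {A B : Finset (Fin m)} (hAB : Disjoint A B)
    (hr : #(A ∪ B) ≤ r) : subcube A B ∈ RMcode m r := by
  rw [subcube_eq_sum_vA hAB]
  refine Submodule.sum_mem _ fun S hS => Submodule.subset_span ⟨A ∪ S, ?_, rfl⟩
  exact (card_le_card (union_subset_union_right (mem_powerset.1 hS))).trans hr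

theorem vA_mem_span_subcube {r : ℕ} (B : Finset (Fin m) → Finset (Fin m))
    (hdisj : ∀ A, Disjoint A (B A)) (hcard : ∀ A, #A ≤ r → #(A ∪ B A) ≤ r)
    {A : Finset (Fin m)} (hA : #A ≤ r) :
    vA m A ∈ Submodule.span (ZMod 2)
      (Set.range fun A : {A : Finset (Fin m) // #A ≤ r} => subcube A.1 (B A.1)) := by
  refine Finset.strongDownwardInductionOn (p := fun A => vA m A ∈ _) A (fun A ih hA => ?_) hA
  have hsplit : vA m A = subcube A (B A) - ∑ S ∈ (B A).powerset.erase ∅, vA m (A ∪ S) := by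
    rw [subcube_eq_sum_vA (hdisj A), ← add_sum_erase _ _ (empty_mem_powerset _), union_empty,
      add_sub_cancel_right]
  rw [hsplit]
  refine sub_mem (Submodule.subset_span ⟨⟨A, hA⟩, rfl⟩) (Submodule.sum_mem _ fun S hS => ?_)
  obtain ⟨hS, hSB⟩ := mem_erase.1 hS
  have hSB := mem_powerset.1 hSB
  have hAS : Disjoint A S := (hdisj A).mono_right hSB
  refine ih ((card_le_card (union_subset_union_right hSB)).trans (hcard A hA)) ?_
  exact left_lt_sup.2 fun hle => hS (hAS.symm.eq_bot_of_le hle)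

theorem exists_disjoint_card_eq_sub {r : ℕ} (hr : r ≤ m) (A : Finset (Fin m)) :
    ∃ B, Disjoint A B ∧ #B = r - #A := by
  obtain ⟨B, hB, hBcard⟩ := exists_subset_card_eq (s := Aᶜ) (n := r - #A)
    (by rw [card_compl, Fintype.card_fin]; omega)
  exact ⟨B, disjoint_of_subset_right hB disjoint_compl_right, hBcard⟩

theorem exists_span_eq_RMcode_wt_eq {r : ℕ} (hr : r ≤ m) :
    ∃ h : {A : Finset (Fin m) // #A ≤ r} → ((Fin m → ZMod 2) → ZMod 2),
      (∀ A, h A ∈ RMcode m r) ∧ (∀ A, wt m (h A) = 2 ^ (m - r)) ∧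
      Submodule.span (ZMod 2) (Set.range h) = RMcode m r := by
  choose B hdisj hBcard using exists_disjoint_card_eq_sub hr
  have hcard : ∀ A : Finset (Fin m), #A ≤ r → #(A ∪ B A) = r := fun A hA => by
    rw [card_union_of_disjoint (hdisj A), hBcard]; omega
  have hmem : ∀ A : {A : Finset (Fin m) // #A ≤ r}, subcube A.1 (B A.1) ∈ RMcode m r :=
    fun A => subcube_mem_RMcode (hdisj A) (hcard A A.2).le
  refine ⟨fun A => subcube A.1 (B A.1), hmem, fun A => ?_, le_antisymm ?_ ?_⟩
  · rw [wt_subcube (hdisj A), hcard A A.2]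
  · exact Submodule.span_le.2 (Set.range_subset_iff.2 hmem)
  · refine Submodule.span_le.2 ?_
    rintro _ ⟨A, hA, rfl⟩
    exact vA_mem_span_subcube B hdisj (fun A hA => (hcard A hA).le) hA

end ReedMuller

/-- There is a family of generators `h_A` of `RM(m/2 - 1, m)`, indexed by the
sets `A ⊆ Fin m` with `|A| ≤ m/2 - 1`, each of Hamming weight exactly
`2 ^ (m/2 + 1) = 2 √n`, that spans the whole code. -/
theorem stmt6 (m : ℕ) (hm : Even m) (h0 : 0 < m) :
    ∃ h : {A : Finset (Fin m) // A.card ≤ m / 2 - 1} → ((Fin m → ZMod 2) → ZMod 2),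
      (∀ A, h A ∈ RMcode m (m / 2 - 1)) ∧
      (∀ A, wt m (h A) = 2 ^ (m / 2 + 1)) ∧
      Submodule.span (ZMod 2) (Set.range h) = RMcode m (m / 2 - 1) := by
  have hm2 : m / 2 * 2 = m := Nat.div_mul_cancel hm.two_dvd
  have hweight : m - (m / 2 - 1) = m / 2 + 1 := by omega
  simpa only [hweight] using
    ReedMuller.exists_span_eq_RMcode_wt_eq (m := m) (r := m / 2 - 1) (by omega)
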